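/- Let g ≥ 2 and let Γ be a stable vine graph of genus g with weights g₁, g₂ and δ edges. Then Γ is d-special if and only if m₁ := d·(2g₁−2+δ)/(2g−2) − δ/2 is an integer, equivalently if and only if (2g−2) divides d·(2g₁−2+δ) − (g−1)·δ. -/

import Mathlib

open Finset

noncomputable section
open scoped Classical

variable {V : Type} [Fintype V] [DecidableEq V]

/-- The simple graph underlying a multigraph with multiplicity function `k`:
`u` and `v` are adjacent iff `u ≠ v` and some edge joins them. -/
def graphOf (k : V → V → ℕ) : SimpleGraph V where
  Adj u v := u ≠ v ∧ (0 < k u v ∨ 0 < k v u)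
  symm := ⟨fun u v h => ⟨h.1.symm, h.2.symm⟩⟩
  loopless := ⟨fun v h => h.1 rfl⟩

/-- The number of edges of a multigraph: loops plus half the ordered count. -/
def numEdges (k : V → V → ℕ) : ℕ :=
  (∑ v, k v v) + (∑ u, ∑ v ∈ Finset.univ.erase u, k u v) / 2

/-- The genus of a weighted graph: `∑ w(v) + b₁`, with `b₁ = #E - #V + 1`. -/
def genus (k : V → V → ℕ) (w : V → ℕ) : ℤ :=
  (∑ v, (w v : ℤ)) + ((numEdges k : ℤ) - (Fintype.card V : ℤ) + 1)

/-- Stability: connected, and each weight-zero vertex has valency at least 3. -/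
def IsStable (k : V → V → ℕ) (w : V → ℕ) : Prop :=
  (graphOf k).Connected ∧
    ∀ v, w v = 0 → 3 ≤ 2 * k v v + ∑ u ∈ Finset.univ.erase v, k u v

/-- `δ_A`: the number of edges joining `A` to its complement. -/
def deltaA (k : V → V → ℕ) (A : Finset V) : ℤ :=
  ∑ u ∈ A, ∑ v ∈ Aᶜ, (k u v : ℤ)

/-- `w_A = Σ_{v∈A} (2w(v) − 2 + 2k(v,v) + Σ_{u≠v} k(u,v))`. -/
def wA (k : V → V → ℕ) (w : V → ℕ) (A : Finset V) : ℤ :=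
  ∑ v ∈ A, (2 * (w v : ℤ) - 2 + 2 * (k v v : ℤ) + ∑ u ∈ Finset.univ.erase v, (k u v : ℤ))

/-- `d_A`: the total degree of a multidegree on the subset `A`. -/
def degA (d : V → ℤ) (A : Finset V) : ℤ := ∑ v ∈ A, d v

/-- `m_A(d) = d·w_A/(2g−2) − δ_A/2 ∈ ℚ`. -/
def mA (k : V → V → ℕ) (w : V → ℕ) (D : ℤ) (A : Finset V) : ℚ :=
  (D : ℚ) * (wA k w A : ℚ) / ((2 * genus k w - 2 : ℤ) : ℚ) - (deltaA k A : ℚ) / 2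

/-- A balanced multidegree of total degree `D`. -/
def IsBalanced (k : V → V → ℕ) (w : V → ℕ) (D : ℤ) (d : V → ℤ) : Prop :=
  degA d Finset.univ = D ∧ ∀ A : Finset V, mA k w D A ≤ (degA d A : ℚ)

/-- A strictly balanced multidegree of total degree `D`. -/
def IsStrictlyBalanced (k : V → V → ℕ) (w : V → ℕ) (D : ℤ) (d : V → ℤ) : Prop :=
  IsBalanced k w D d ∧
    ∀ A : Finset V, A ≠ ∅ → A ≠ Finset.univ → mA k w D A < (degA d A : ℚ)

/-- `(Γ,w)` is `d`-general if every balanced multidegree of total degree `d`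
is strictly balanced. -/
def IsDGeneral (k : V → V → ℕ) (w : V → ℕ) (D : ℤ) : Prop :=
  ∀ d : V → ℤ, IsBalanced k w D d → IsStrictlyBalanced k w D d

/-- The generator `c_v` of the lattice `Λ`. -/
def cvec (k : V → V → ℕ) (v : V) : V → ℤ := fun u =>
  if u = v then -(∑ x ∈ Finset.univ.erase v, (k x v : ℤ)) else (k u v : ℤ)

/-- The lattice `Λ ⊆ ℤ^V` generated by the `c_v`. -/
def Lambda (k : V → V → ℕ) : AddSubgroup (V → ℤ) :=
  AddSubgroup.closure (Set.range (cvec k))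

/-- The total-degree homomorphism `ℤ^V → ℤ`. -/
def sumHom (V : Type) [Fintype V] : (V → ℤ) →+ ℤ :=
  { toFun := fun d => ∑ v, d v
    map_zero' := by simp
    map_add' := fun a b => by simp [Finset.sum_add_distrib] }

/-- `Z = {d ∈ ℤ^V : Σ_v d(v) = 0}`. -/
def Zsub (V : Type) [Fintype V] : AddSubgroup (V → ℤ) := (sumHom V).ker

/-- Remove the edge(s) joining `a` and `b` from the multigraph. -/
def removeEdge (k : V → V → ℕ) (a b : V) : V → V → ℕ := fun u v =>
  if (u = a ∧ v = b) ∨ (u = b ∧ v = a) then 0 else k u v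

/-- `a`–`b` is a bridge: a single non-loop edge whose removal disconnects the graph. -/
def IsBridge (k : V → V → ℕ) (a b : V) : Prop :=
  a ≠ b ∧ k a b = 1 ∧ ¬ (graphOf (removeEdge k a b)).Connected

/-- `A` induces a connected sub-multigraph. -/
def IsConnectedSubset (k : V → V → ℕ) (A : Finset V) : Prop :=
  ((graphOf k).induce (A : Set V)).Connected

/-- The equivalence relation `≈` on `V` generated by bridges. -/
def contractSetoid (k : V → V → ℕ) : Setoid V :=
  ⟨Relation.EqvGen (fun u v => IsBridge k u v), Relation.EqvGen.is_equivalence _⟩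

/-- The vertex set `V² = V/≈` of the contracted graph `Γ²`. -/
def V2 (k : V → V → ℕ) : Type := Quotient (contractSetoid k)

instance (k : V → V → ℕ) : Finite (V2 k) := Quotient.finite _

instance (k : V → V → ℕ) : Fintype (V2 k) := Fintype.ofFinite _

/-- The fiber of the quotient map `φ : V → V²` over a class `c`. -/
def fiber (k : V → V → ℕ) (c : V2 k) : Finset V :=
  Finset.univ.filter (fun v => Quotient.mk (contractSetoid k) v = c)

/-- The multiplicity function `k²` of the contracted graph `Γ²`. -/
def k2 (k : V → V → ℕ) : V2 k → V2 k → ℕ := fun c c' =>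
  if c = c' then
    (∑ v ∈ fiber k c, k v v) +
      (∑ u ∈ fiber k c, ∑ v ∈ (fiber k c).erase u,
        if IsBridge k u v then 0 else k u v) / 2
  else ∑ u ∈ fiber k c, ∑ v ∈ fiber k c', k u v

/-- The weight function `w²` of the contracted weighted graph `(Γ²,w²)`. -/
def w2 (k : V → V → ℕ) (w : V → ℕ) : V2 k → ℕ := fun c => ∑ v ∈ fiber k c, w v

/-- The pushforward `α(d)` of a multidegree to the contracted graph. -/
def alphaMap (k : V → V → ℕ) (d : V → ℤ) : V2 k → ℤ := fun c => ∑ v ∈ fiber k c, d v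

/-- The setoid on multidegrees of total degree `D`: two are equivalent if their
difference lies in `Λ`; the quotient is `Δ^d`. -/
def degSetoid (k : V → V → ℕ) (D : ℤ) : Setoid {d : V → ℤ // (∑ v, d v) = D} :=
  ⟨fun a b => (a : V → ℤ) - (b : V → ℤ) ∈ Lambda k, by
    constructor
    · intro a; simpa using (Lambda k).zero_mem
    · intro a b h; have h2 := (Lambda k).neg_mem h; rwa [neg_sub] at h2
    · intro a b c h1 h2
      have h3 := (Lambda k).add_mem h1 h2
      rwa [sub_add_sub_cancel] at h3⟩

/-- Number of edges of the sub-multigraph induced on `A`. -/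
def numEdgesIn (k : V → V → ℕ) (A : Finset V) : ℕ :=
  (∑ v ∈ A, k v v) + (∑ u ∈ A, ∑ v ∈ A.erase u, k u v) / 2

/-- Blow-up of a multigraph at the single bridge `a`–`b`: one exceptional
vertex is inserted in the middle of the bridge. -/
def blowK (k : V → V → ℕ) (a b : V) : (V ⊕ Unit) → (V ⊕ Unit) → ℕ
  | Sum.inl u, Sum.inl v => if (u = a ∧ v = b) ∨ (u = b ∧ v = a) then 0 else k u v
  | Sum.inl u, Sum.inr _ => if u = a ∨ u = b then 1 else 0
  | Sum.inr _, Sum.inl v => if v = a ∨ v = b then 1 else 0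
  | Sum.inr _, Sum.inr _ => 0

/-- Weight function of the blow-up at one bridge: exceptional vertex has weight 0. -/
def blowW (w : V → ℕ) : V ⊕ Unit → ℕ
  | Sum.inl v => w v
  | Sum.inr _ => 0

/-- Blow-up of a multigraph at a set `S` of bridges (given as ordered pairs):
one exceptional vertex is inserted in the middle of each bridge of `S`. -/
def blowKS (k : V → V → ℕ) (S : Finset (V × V)) :
    (V ⊕ {p : V × V // p ∈ S}) → (V ⊕ {p : V × V // p ∈ S}) → ℕ
  | Sum.inl u, Sum.inl v => if (u, v) ∈ S ∨ (v, u) ∈ S then 0 else k u v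
  | Sum.inl u, Sum.inr e => if u = e.1.1 ∨ u = e.1.2 then 1 else 0
  | Sum.inr e, Sum.inl v => if v = e.1.1 ∨ v = e.1.2 then 1 else 0
  | Sum.inr _, Sum.inr _ => 0

/-- Weight function of the blow-up at a set of bridges. -/
def blowWS (w : V → ℕ) (S : Finset (V × V)) : (V ⊕ {p : V × V // p ∈ S}) → ℕ
  | Sum.inl v => w v
  | Sum.inr _ => 0

/-- Strictly balanced multidegree of total degree `D` on the blow-up `Γ̂_S`:
balanced (with degree 1 on each exceptional vertex), and the inequality is
strict for every proper nonempty `A` such that some edge between `A` and its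
complement has no exceptional endpoint. -/
def IsStrictlyBalancedBlowS (k : V → V → ℕ) (w : V → ℕ) (S : Finset (V × V)) (D : ℤ)
    (dh : (V ⊕ {p : V × V // p ∈ S}) → ℤ) : Prop :=
  IsBalanced (blowKS k S) (blowWS w S) D dh ∧
    (∀ e : {p : V × V // p ∈ S}, dh (Sum.inr e) = 1) ∧
    ∀ A : Finset (V ⊕ {p : V × V // p ∈ S}), A ≠ ∅ → A ≠ Finset.univ →
      (∃ u v : V, Sum.inl u ∈ A ∧ Sum.inl v ∉ A ∧ 0 < blowKS k S (Sum.inl u) (Sum.inl v)) →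
      mA (blowKS k S) (blowWS w S) D A < (degA dh A : ℚ)

/-- Multiplicity function of the vine graph: two vertices joined by `δ` edges,
no loops. -/
def vineK (δ : ℕ) : Fin 2 → Fin 2 → ℕ := fun u v => if u = v then 0 else δ

/-- Weight function of the vine graph with weights `g₁, g₂`. -/
def vineW (g1 g2 : ℕ) : Fin 2 → ℕ := fun v => if v = 0 then g1 else g2

/-- The data of a stable vine graph of genus `g` with weights `g₁, g₂` and `δ` edges. -/
def StableVine (g : ℤ) (g1 g2 δ : ℕ) : Prop :=
  2 ≤ δ ∧ ((g1 = 0 ∨ g2 = 0) → 3 ≤ δ) ∧ (g1 : ℤ) + (g2 : ℤ) + (δ : ℤ) - 1 = g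

/-! On the two-vertex graph the proper nonempty subsets are the singletons, and
`m_{v₁} + m_{v₂} = d − δ`. Hence `d` is balanced iff `d(v₁) ∈ [m₁, m₁ + δ]` (with
`d(v₂) = d − d(v₁)`), and a balanced `d` fails to be strictly balanced iff `d(v₁)` is an endpoint
of this interval; such a `d` exists iff `m₁ ∈ ℤ`. Finally `m₁ = (d(2g₁−2+δ) − (g−1)δ)/(2g−2)`. -/

theorem mA_empty (k : V → V → ℕ) (w : V → ℕ) (D : ℤ) : mA k w D ∅ = 0 := by
  simp [mA, wA, deltaA]

theorem isDGeneral_of_forall_mA_ne_intCast {k : V → V → ℕ} {w : V → ℕ} {D : ℤ}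
    (h : ∀ A : Finset V, A ≠ ∅ → A ≠ univ → ∀ n : ℤ, mA k w D A ≠ n) :
    IsDGeneral k w D :=
  fun _ hd => ⟨hd, fun A hA hA' => lt_of_le_of_ne (hd.2 A) (h A hA hA' _)⟩

theorem finset_fin_two_cases (A : Finset (Fin 2)) :
    A = ∅ ∨ A = {0} ∨ A = {1} ∨ A = univ := by
  revert A; decide

theorem exists_intCast_eq_div_iff_dvd {y N : ℤ} (hN : N ≠ 0) :
    (∃ n : ℤ, (y : ℚ) / N = n) ↔ N ∣ y := by
  have hN' : (N : ℚ) ≠ 0 := by exact_mod_cast hN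
  constructor
  · rintro ⟨n, hn⟩
    refine ⟨n, ?_⟩
    rw [div_eq_iff hN'] at hn
    exact_mod_cast (by rw [hn, mul_comm] : (y : ℚ) = N * n)
  · rintro ⟨n, rfl⟩
    exact ⟨n, by push_cast; field_simp⟩

section Vine

variable {g : ℤ} {g1 g2 δ : ℕ} (D : ℤ)

theorem genus_vine : genus (vineK δ) (vineW g1 g2) = (g1 : ℤ) + g2 + δ - 1 := by
  simp only [genus, vineW, Fin.isValue, Nat.cast_ite, Fin.sum_univ_two, ↓reduceIte, one_ne_zero,
    numEdges, vineK, sum_const_zero, zero_add, Int.natCast_ediv, Nat.cast_add, Nat.cast_sum,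
    CharP.cast_eq_zero, mem_univ, sum_erase_eq_sub, zero_ne_one, sub_zero, add_zero, Nat.cast_ofNat,
    Fintype.card_fin]
  omega

variable (hg : (g1 : ℤ) + g2 + δ - 1 = g)
include hg

theorem mA_vine_singleton_zero :
    mA (vineK δ) (vineW g1 g2) D {0} =
      (D : ℚ) * (2 * (g1 : ℚ) - 2 + δ) / (2 * (g : ℚ) - 2) - (δ : ℚ) / 2 := by
  have hcompl : ({0}ᶜ : Finset (Fin 2)) = {1} := by decide
  simp [mA, wA, deltaA, genus_vine, hg, vineK, vineW, hcompl]

variable {D} in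
theorem mA_vine_singleton_one (hg1 : g ≠ 1) :
    mA (vineK δ) (vineW g1 g2) D {1} = D - δ - mA (vineK δ) (vineW g1 g2) D {0} := by
  have hcompl : ({1}ᶜ : Finset (Fin 2)) = {0} := by decide
  have hg1' : (g : ℚ) - 1 ≠ 0 := sub_ne_zero.2 (by exact_mod_cast hg1)
  rw [mA_vine_singleton_zero D hg]
  simp only [mA, wA, Fin.isValue, vineW, Nat.cast_ite, mul_ite, vineK, ↓reduceIte,
    CharP.cast_eq_zero, mul_zero, add_zero, mem_univ, sum_erase_eq_sub, Fin.sum_univ_two, sub_zero,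
    sum_singleton, one_ne_zero, zero_ne_one, Int.cast_add, Int.cast_sub, Int.cast_mul,
    Int.cast_ofNat, Int.cast_natCast, genus_vine, hg, deltaA, hcompl]
  have hg' : (g1 : ℚ) + g2 + δ - 1 = g := by exact_mod_cast hg
  field_simp
  linear_combination (2 * D) * hg'

theorem mA_vine_univ (hg1 : g ≠ 1) : mA (vineK δ) (vineW g1 g2) D univ = D := by
  have hg1' : (g : ℚ) - 1 ≠ 0 := sub_ne_zero.2 (by exact_mod_cast hg1)
  have hg' : (g1 : ℚ) + g2 + δ - 1 = g := by exact_mod_cast hg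
  simp only [mA, wA, vineW, Fin.isValue, Nat.cast_ite, mul_ite, vineK, ↓reduceIte,
    CharP.cast_eq_zero, mul_zero, add_zero, mem_univ, sum_erase_eq_sub, Fin.sum_univ_two, sub_zero,
    one_ne_zero, zero_add, zero_ne_one, Int.cast_add, Int.cast_sub, Int.cast_mul, Int.cast_ofNat,
    Int.cast_natCast, genus_vine, hg, deltaA, compl_univ, sum_empty, sum_const_zero, Int.cast_zero,
    zero_div]
  field_simp
  linear_combination (2 * D) * hg'

variable {D} in
theorem not_isDGeneral_vine_of_mA_eq_intCast (hg1 : g ≠ 1) {n : ℤ}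
    (hn : mA (vineK δ) (vineW g1 g2) D {0} = n) : ¬ IsDGeneral (vineK δ) (vineW g1 g2) D := by
  let d : Fin 2 → ℤ := ![n, D - n]
  have hbalanced : IsBalanced (vineK δ) (vineW g1 g2) D d := by
    refine ⟨by simp [d, degA], fun A => ?_⟩
    rcases finset_fin_two_cases A with rfl | rfl | rfl | rfl
    · simp [mA_empty, degA]
    · simp [hn, d, degA]
    · rw [mA_vine_singleton_one hg hg1, hn]
      simp [d, degA]
    · simp [mA_vine_univ D hg hg1, d, degA]
  intro hgeneral
  have hstrict := (hgeneral d hbalanced).2 {0} (by decide) (by decide)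
  simp [hn, d, degA] at hstrict

variable {D} in
theorem not_isDGeneral_vine_iff (hg1 : g ≠ 1) :
    ¬ IsDGeneral (vineK δ) (vineW g1 g2) D ↔ ∃ n : ℤ, mA (vineK δ) (vineW g1 g2) D {0} = n := by
  refine ⟨fun hspecial => ?_, fun ⟨n, hn⟩ => not_isDGeneral_vine_of_mA_eq_intCast hg hg1 hn⟩
  by_contra! hm
  refine hspecial (isDGeneral_of_forall_mA_ne_intCast fun A hA hA' n => ?_)
  rcases finset_fin_two_cases A with rfl | rfl | rfl | rfl
  · exact absurd rfl hA
  · exact hm n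
  · rw [mA_vine_singleton_one hg hg1]
    intro h
    exact hm (D - δ - n) (by push_cast; linarith)
  · exact absurd rfl hA'

end Vine

/-- A stable vine graph of genus `g` with weights `g₁, g₂` and
`δ` edges is `d`-special iff `m₁ = d(2g₁−2+δ)/(2g−2) − δ/2` is an integer, iff
`(2g−2) ∣ d(2g₁−2+δ) − (g−1)δ`. -/
theorem stmt19 (g d : ℤ) (hg : 2 ≤ g) (g1 g2 δ : ℕ)
    (hstable : StableVine g g1 g2 δ) :
    (¬ IsDGeneral (vineK δ) (vineW g1 g2) d ↔
      ∃ n : ℤ, (d : ℚ) * (2 * (g1 : ℚ) - 2 + (δ : ℚ)) / (2 * (g : ℚ) - 2) - (δ : ℚ) / 2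
        = (n : ℚ)) ∧
    (¬ IsDGeneral (vineK δ) (vineW g1 g2) d ↔
      (2 * g - 2) ∣ (d * (2 * (g1 : ℤ) - 2 + (δ : ℤ)) - (g - 1) * (δ : ℤ))) := by
  obtain ⟨-, -, hgenus⟩ := hstable
  have hg1 : g ≠ 1 := by omega
  have hspecial := not_isDGeneral_vine_iff (D := d) hgenus hg1
  rw [mA_vine_singleton_zero d hgenus] at hspecial
  refine ⟨hspecial, hspecial.trans ?_⟩
  have hm : (d : ℚ) * (2 * g1 - 2 + δ) / (2 * g - 2) - δ / 2 =
      ((d * (2 * g1 - 2 + δ) - (g - 1) * δ : ℤ) : ℚ) / ((2 * g - 2 : ℤ) : ℚ) := by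
    have hg1' : (g : ℚ) - 1 ≠ 0 := sub_ne_zero.2 (by exact_mod_cast hg1)
    push_cast
    field_simp
  rw [hm, exists_intCast_eq_div_iff_dvd (by omega)]
end
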